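/- Let n ≥ 1 and i ≥ 1. If BH_n has a restricted 2i-vertex cut, then the restricted (2i)-connectivity of BH_n equals its restricted (2i−1)-connectivity: κ^{2i}(BH_n) = κ^{2i−1}(BH_n), i.e., the minimum cardinality of a restricted 2i-vertex cut equals the minimum cardinality of a restricted (2i−1)-vertex cut. -/

import Mathlib

open SimpleGraph

/-- `bhSigma u` is 1 if the inner index `u 0` is 0 or 2, and 3 (= -1) otherwise. -/
def bhSigma {n : ℕ} [NeZero n] (u : Fin n → ZMod 4) : ZMod 4 :=
  if u 0 = 0 ∨ u 0 = 2 then 1 else 3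

/-- The adjacency relation underlying the balanced hypercube `BH n`. -/
def bhRel {n : ℕ} [NeZero n] (u v : Fin n → ZMod 4) : Prop :=
  ∃ ε : ZMod 4, (ε = 1 ∨ ε = 3) ∧
    ((v 0 = u 0 + ε ∧ ∀ i : Fin n, i ≠ 0 → v i = u i) ∨
     (∃ i : Fin n, 1 ≤ (i : ℕ) ∧ v 0 = u 0 + ε ∧ v i = u i + bhSigma u ∧
        ∀ j : Fin n, j ≠ 0 → j ≠ i → v j = u j))

/-- The `n`-dimensional balanced hypercube. -/
def BH (n : ℕ) [NeZero n] : SimpleGraph (Fin n → ZMod 4) :=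
  SimpleGraph.fromRel bhRel

/-- `F` is a restricted `h`-vertex cut of `G`: deleting `F` disconnects `G`,
and every vertex of the remaining graph has at least `h` neighbours there
(equivalently, every connected component has minimum degree at least `h`). -/
def IsRestrictedCut {V : Type*} (G : SimpleGraph V) (h : ℕ) (F : Set V) : Prop :=
  ¬ (G.induce Fᶜ).Connected ∧
    ∀ v : ↥Fᶜ, h ≤ ((G.induce Fᶜ).neighborSet v).ncard

/-- `F` is a `g`-vertex cut of `G`: deleting `F` disconnects `G`, and every
connected component of the remaining graph has at least `g + 1` vertices. -/
def IsGVertexCut {V : Type*} (G : SimpleGraph V) (g : ℕ) (F : Set V) : Prop :=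
  ¬ (G.induce Fᶜ).Connected ∧
    ∀ C : (G.induce Fᶜ).ConnectedComponent, g + 1 ≤ C.supp.ncard

/-- The vertex neighbourhood of a set `S`: vertices outside `S` adjacent to some vertex of `S`. -/
def setNbhd {V : Type*} (G : SimpleGraph V) (S : Set V) : Set V :=
  {v | v ∉ S ∧ ∃ u ∈ S, G.Adj v u}

/-- The vertex of `BH n` with first three coordinates `a, b, c` and all others `0`. -/
def tVertex (n : ℕ) (a b c : ZMod 4) : Fin n → ZMod 4 :=
  fun j => if (j : ℕ) = 0 then a else if (j : ℕ) = 1 then b else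
    if (j : ℕ) = 2 then c else 0

/-- The distinguished 12-vertex set `T` in `BH n` (`n ≥ 3`). -/
def Tset (n : ℕ) : Set (Fin n → ZMod 4) :=
  {tVertex n 0 0 0, tVertex n 2 0 0, tVertex n 1 0 0, tVertex n 3 0 0,
   tVertex n 0 3 0, tVertex n 2 3 0, tVertex n 1 0 1, tVertex n 3 0 1,
   tVertex n 0 3 1, tVertex n 2 3 1, tVertex n 1 3 1, tVertex n 3 3 1}

/-- The last coordinate `u (n-1)` of a vertex of `BH n`. -/
def lastCoord (n : ℕ) [NeZero n] (u : Fin n → ZMod 4) : ZMod 4 :=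
  u ⟨n - 1, Nat.sub_lt (Nat.pos_of_ne_zero (NeZero.ne n)) Nat.one_pos⟩

section Twin

variable {n : ℕ} [NeZero n]

/-- The twin map: add 2 to the 0-th coordinate. -/
def tw (u : Fin n → ZMod 4) : Fin n → ZMod 4 := Function.update u 0 (u 0 + 2)

lemma tw_zero (u : Fin n → ZMod 4) : tw u 0 = u 0 + 2 := Function.update_self _ _ _

lemma tw_apply (u : Fin n → ZMod 4) {i : Fin n} (hi : i ≠ 0) : tw u i = u i :=
  Function.update_of_ne hi _ _

lemma tw_tw (u : Fin n → ZMod 4) : tw (tw u) = u := by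
  funext j
  by_cases hj : j = 0
  · subst hj
    rw [tw_zero, tw_zero]
    have : (2 : ZMod 4) + 2 = 0 := by decide
    rw [add_assoc, this, add_zero]
  · rw [tw_apply _ hj, tw_apply _ hj]

lemma self_eq_add_false {x c : ZMod 4} (hc : c ≠ 0) (h : x = x + c) : False := by
  have h' : x + 0 = x + c := by rw [add_zero]; exact h
  exact hc (add_left_cancel h').symm

lemma tw_ne (u : Fin n → ZMod 4) : tw u ≠ u := by
  intro hEq
  have h0 := congrFun hEq 0
  rw [tw_zero] at h0
  exact self_eq_add_false (by decide) h0.symm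

lemma bhSigma_tw (u : Fin n → ZMod 4) : bhSigma (tw u) = bhSigma u := by
  have hx : ∀ x : ZMod 4, (x + 2 = 0 ∨ x + 2 = 2) ↔ (x = 0 ∨ x = 2) := by decide
  unfold bhSigma
  rw [tw_zero]
  exact if_congr (hx (u 0)) rfl rfl

lemma bhRel_zero {u v : Fin n → ZMod 4} (h : bhRel u v) :
    v 0 = u 0 + 1 ∨ v 0 = u 0 + 3 := by
  obtain ⟨ε, hε, hc⟩ := h
  rcases hc with ⟨h0, -⟩ | ⟨i, -, h0, -, -⟩ <;> rcases hε with rfl | rfl <;> simp [h0]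

lemma bhRel_tw_left {u v : Fin n → ZMod 4} : bhRel (tw u) v ↔ bhRel u v := by
  have key : ∀ w : Fin n → ZMod 4, bhRel w v → bhRel (tw w) v := by
    intro w ⟨ε, hε, hc⟩
    refine ⟨ε + 2, by rcases hε with rfl | rfl <;> decide, ?_⟩
    have h0 : ∀ x : ZMod 4, w 0 + x = tw w 0 + (x + 2) := by
      intro x
      rw [tw_zero, show w 0 + 2 + (x + 2) = w 0 + x + (2 + 2) by ring,
        show (2 : ZMod 4) + 2 = 0 by decide, add_zero]
    rcases hc with ⟨hv0, hrest⟩ | ⟨i, hi1, hv0, hvi, hrest⟩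
    · left
      exact ⟨by rw [hv0, h0], fun i hi => by rw [hrest i hi, tw_apply _ hi]⟩
    · right
      have hine : i ≠ 0 := by
        intro hEq; rw [hEq] at hi1; simp at hi1
      refine ⟨i, hi1, by rw [hv0, h0], ?_, fun j hj hji => by rw [hrest j hj hji, tw_apply _ hj]⟩
      rw [hvi, tw_apply _ hine, bhSigma_tw]
  constructor
  · intro hw
    have := key (tw u) hw
    rwa [tw_tw] at this
  · exact key u

lemma bhRel_tw_right {u v : Fin n → ZMod 4} : bhRel v (tw u) ↔ bhRel v u := by
  have key : ∀ w : Fin n → ZMod 4, bhRel v w → bhRel v (tw w) := by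
    intro w ⟨ε, hε, hc⟩
    refine ⟨ε + 2, by rcases hε with rfl | rfl <;> decide, ?_⟩
    have h0 : tw w 0 = v 0 + (ε + 2) ↔ w 0 = v 0 + ε := by
      rw [tw_zero]
      constructor
      · intro hh
        have : w 0 + 2 + 2 = v 0 + (ε + 2) + 2 := by rw [hh]
        rw [show w 0 + 2 + 2 = w 0 + (2 + 2) by ring,
          show v 0 + (ε + 2) + 2 = v 0 + ε + (2 + 2) by ring,
          show (2 : ZMod 4) + 2 = 0 by decide, add_zero, add_zero] at this
        exact this
      · intro hh
        rw [hh, show v 0 + ε + 2 = v 0 + (ε + 2) by ring]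
    rcases hc with ⟨hv0, hrest⟩ | ⟨i, hi1, hv0, hvi, hrest⟩
    · left
      exact ⟨h0.mpr hv0, fun i hi => by rw [tw_apply _ hi]; exact hrest i hi⟩
    · right
      have hine : i ≠ 0 := by
        intro hEq; rw [hEq] at hi1; simp at hi1
      exact ⟨i, hi1, h0.mpr hv0, by rw [tw_apply _ hine]; exact hvi,
        fun j hj hji => by rw [tw_apply _ hj]; exact hrest j hj hji⟩
  constructor
  · intro hw
    have := key (tw u) hw
    rwa [tw_tw] at this
  · exact key u

lemma not_adj_tw (u : Fin n → ZMod 4) : ¬ (BH n).Adj u (tw u) := by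
  intro hadj
  rw [BH, fromRel_adj] at hadj
  rcases hadj.2 with hr | hr
  · rcases bhRel_zero hr with h | h
    · rw [tw_zero] at h
      exact absurd (add_left_cancel h) (by decide)
    · rw [tw_zero] at h
      exact absurd (add_left_cancel h) (by decide)
  · rcases bhRel_zero hr with h | h
    · rw [tw_zero, add_assoc] at h
      exact self_eq_add_false (by decide) h
    · rw [tw_zero, add_assoc] at h
      exact self_eq_add_false (by decide) h

lemma adj_tw {u v : Fin n → ZMod 4} : (BH n).Adj v (tw u) ↔ (BH n).Adj v u := by
  rw [BH, fromRel_adj, fromRel_adj, bhRel_tw_left, bhRel_tw_right]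
  constructor
  · rintro ⟨hne, hr⟩
    refine ⟨?_, hr⟩
    rintro rfl
    rcases hr with hr | hr <;>
      rcases bhRel_zero hr with h | h <;>
      exact self_eq_add_false (by decide) h
  · rintro ⟨hne, hr⟩
    refine ⟨?_, hr⟩
    rintro rfl
    exact not_adj_tw u ((BH n).adj_symm (by rw [BH] at *; exact fromRel_adj .. |>.mpr ⟨hne, hr⟩))
lemma adj_tw' {n : ℕ} [NeZero n] {u v : Fin n → ZMod 4} (h : (BH n).Adj v u) :
    (BH n).Adj v (tw u) := adj_tw.mpr h

lemma even_card_invol {α : Type*} [DecidableEq α] (f : α → α) (s : Finset α)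
    (hmem : ∀ a ∈ s, f a ∈ s) (hinv : ∀ a ∈ s, f (f a) = a) (hne : ∀ a ∈ s, f a ≠ a) :
    Even s.card := by
  induction s using Finset.strongInduction with
  | _ s ih =>
    rcases s.eq_empty_or_nonempty with rfl | ⟨a, ha⟩
    · simp
    · have hfa : f a ∈ s := hmem a ha
      have hfane : f a ≠ a := hne a ha
      have hsub : ({a, f a} : Finset α) ⊆ s := by
        intro x hx
        rcases Finset.mem_insert.mp hx with rfl | hx
        · exact ha
        · rw [Finset.mem_singleton] at hx; subst hx; exact hfa
      have hpair : ({a, f a} : Finset α).card = 2 := Finset.card_pair (Ne.symm hfane)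
      have hss : s \ {a, f a} ⊂ s := Finset.sdiff_ssubset hsub ⟨a, Finset.mem_insert_self _ _⟩
      have hmem' : ∀ x ∈ s \ {a, f a}, x ∈ s ∧ x ≠ a ∧ x ≠ f a := by
        intro x hx
        rw [Finset.mem_sdiff, Finset.mem_insert, Finset.mem_singleton] at hx
        tauto
      have hmem'' : ∀ x, x ∈ s ∧ x ≠ a ∧ x ≠ f a → x ∈ s \ {a, f a} := by
        intro x hx
        rw [Finset.mem_sdiff, Finset.mem_insert, Finset.mem_singleton]
        tauto
      have hE := ih (s \ {a, f a}) hss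
        (by
          intro x hx
          obtain ⟨hxs, hxa, hxfa⟩ := hmem' x hx
          refine hmem'' _ ⟨hmem x hxs, ?_, ?_⟩
          · intro hEq; exact hxfa (by rw [← hEq, hinv x hxs])
          · intro hEq
            have := congrArg f hEq
            rw [hinv x hxs, hinv a ha] at this
            exact hxa this)
        (fun x hx => hinv x (hmem' x hx).1)
        (fun x hx => hne x (hmem' x hx).1)
      have hcard : s.card = (s \ {a, f a}).card + 2 := by
        rw [Finset.card_sdiff_of_subset hsub, hpair]
        have := Finset.card_le_card hsub
        omega
      obtain ⟨c, hc⟩ := hE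
      exact ⟨c + 1, by omega⟩

lemma delete_cut {n : ℕ} [NeZero n] (h : ℕ) (F : Set (Fin n → ZMod 4))
    (hF : IsRestrictedCut (BH n) h F) (u : Fin n → ZMod 4)
    (hu : u ∈ F) (htu : tw u ∉ F) : IsRestrictedCut (BH n) h (F \ {u}) := by
  obtain ⟨hdis, hdeg⟩ := hF
  have hSsub : (Fᶜ : Set (Fin n → ZMod 4)) ⊆ (F \ {u})ᶜ := by
    intro x hx
    simp only [Set.mem_compl_iff, Set.mem_diff, Set.mem_singleton_iff] at hx ⊢
    tauto
  have htumem : tw u ∈ (Fᶜ : Set (Fin n → ZMod 4)) := htu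
  have hmem' : ∀ a : ↥((F \ {u})ᶜ), a.1 ≠ u → a.1 ∈ (Fᶜ : Set (Fin n → ZMod 4)) := by
    intro a ha
    have := a.2
    simp only [Set.mem_compl_iff, Set.mem_diff, Set.mem_singleton_iff] at this ⊢
    tauto
  classical
  let f : ↥((F \ {u})ᶜ) → ↥(Fᶜ : Set (Fin n → ZMod 4)) := fun a =>
    if ha : a.1 = u then ⟨tw u, htumem⟩ else ⟨a.1, hmem' a ha⟩
  have hhom : ∀ a b : ↥((F \ {u})ᶜ),
      ((BH n).induce ((F \ {u})ᶜ)).Adj a b → ((BH n).induce Fᶜ).Adj (f a) (f b) := by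
    intro a b hab
    rw [SimpleGraph.comap_adj] at hab ⊢
    simp only [Function.Embedding.coe_subtype] at hab ⊢
    by_cases ha : a.1 = u <;> by_cases hb : b.1 = u
    · exfalso
      rw [ha, hb] at hab
      exact (BH n).irrefl hab
    · simp only [f, dif_pos ha, dif_neg hb]
      rw [ha] at hab
      exact ((BH n).adj_symm (adj_tw' ((BH n).adj_symm hab)))
    · simp only [f, dif_neg ha, dif_pos hb]
      rw [hb] at hab
      exact adj_tw' hab
    · simpa only [f, dif_neg ha, dif_neg hb] using hab
  constructor
  · intro hcon
    apply hdis
    have hne : Nonempty ↥(Fᶜ : Set (Fin n → ZMod 4)) := ⟨⟨tw u, htumem⟩⟩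
    refine ⟨fun x y => ?_⟩
    have hx' : x.1 ∈ ((F \ {u})ᶜ : Set (Fin n → ZMod 4)) := hSsub x.2
    have hy' : y.1 ∈ ((F \ {u})ᶜ : Set (Fin n → ZMod 4)) := hSsub y.2
    have hxu : x.1 ≠ u := fun hEq => x.2 (hEq ▸ hu)
    have hyu : y.1 ≠ u := fun hEq => y.2 (hEq ▸ hu)
    have hr := hcon.preconnected ⟨x.1, hx'⟩ ⟨y.1, hy'⟩
    have hr' := hr.map (⟨f, fun {a b} hab => hhom a b hab⟩ :
      ((BH n).induce ((F \ {u})ᶜ)) →g ((BH n).induce Fᶜ))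
    have hfx : f ⟨x.1, hx'⟩ = x := by
      simp only [f, dif_neg hxu]
    have hfy : f ⟨y.1, hy'⟩ = y := by
      simp only [f, dif_neg hyu]
    rw [show ((⟨f, fun {a b} hab => hhom a b hab⟩ :
      ((BH n).induce ((F \ {u})ᶜ)) →g ((BH n).induce Fᶜ)) ⟨x.1, hx'⟩) = f ⟨x.1, hx'⟩ from rfl,
      show ((⟨f, fun {a b} hab => hhom a b hab⟩ :
      ((BH n).induce ((F \ {u})ᶜ)) →g ((BH n).induce Fᶜ)) ⟨y.1, hy'⟩) = f ⟨y.1, hy'⟩ from rfl,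
      hfx, hfy] at hr'
    exact hr'
  · intro v
    by_cases hv : v.1 = u
    · -- use degree of tw u
      have hbound := hdeg ⟨tw u, htumem⟩
      refine le_trans hbound (Set.ncard_le_ncard_of_injOn
        (fun a => (⟨a.1, hSsub a.2⟩ : ↥((F \ {u})ᶜ))) ?_ ?_ (Set.toFinite _))
      · intro a haN
        rw [SimpleGraph.mem_neighborSet, SimpleGraph.comap_adj] at haN ⊢
        simp only [Function.Embedding.coe_subtype] at haN ⊢
        rw [hv]
        exact ((BH n).adj_symm (adj_tw.mp ((BH n).adj_symm haN)))
      · intro a _ b _ hEq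
        exact Subtype.ext (Subtype.mk_eq_mk.mp hEq)
    · have hbound := hdeg ⟨v.1, hmem' v hv⟩
      refine le_trans hbound (Set.ncard_le_ncard_of_injOn
        (fun a => (⟨a.1, hSsub a.2⟩ : ↥((F \ {u})ᶜ))) ?_ ?_ (Set.toFinite _))
      · intro a haN
        rw [SimpleGraph.mem_neighborSet, SimpleGraph.comap_adj] at haN ⊢
        simpa only [Function.Embedding.coe_subtype] using haN
      · intro a _ b _ hEq
        exact Subtype.ext (Subtype.mk_eq_mk.mp hEq)
theorem bh_restricted_even_odd (n i : ℕ) [NeZero n] (hn : 1 ≤ n) (hi : 1 ≤ i)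
    (h : ∃ F : Set (Fin n → ZMod 4), IsRestrictedCut (BH n) (2 * i) F) :
    sInf {m : ℕ | ∃ F : Set (Fin n → ZMod 4), IsRestrictedCut (BH n) (2 * i) F ∧ F.ncard = m} =
    sInf {m : ℕ | ∃ F : Set (Fin n → ZMod 4), IsRestrictedCut (BH n) (2 * i - 1) F ∧ F.ncard = m} := by
  classical
  set A := {m : ℕ | ∃ F : Set (Fin n → ZMod 4), IsRestrictedCut (BH n) (2 * i) F ∧ F.ncard = m}
    with hAdef
  set B := {m : ℕ | ∃ F : Set (Fin n → ZMod 4), IsRestrictedCut (BH n) (2 * i - 1) F ∧ F.ncard = m}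
    with hBdef
  have hAne : A.Nonempty := by
    obtain ⟨F, hF⟩ := h
    exact ⟨F.ncard, F, hF, rfl⟩
  have hAB : A ⊆ B := by
    rintro m ⟨F, ⟨hd, hdeg⟩, hc⟩
    exact ⟨F, ⟨hd, fun v => le_trans (by omega) (hdeg v)⟩, hc⟩
  have hBne : B.Nonempty := ⟨_, hAB (Nat.sInf_mem hAne)⟩
  refine le_antisymm ?_ (Nat.sInf_le (hAB (Nat.sInf_mem hAne)))
  obtain ⟨F, hF, hcard⟩ := Nat.sInf_mem hBne
  have hclosed : ∀ u ∈ F, tw u ∈ F := by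
    intro u hu
    by_contra htu
    have hcut := delete_cut (2 * i - 1) F hF u hu htu
    have h1 : (F \ {u}).ncard = F.ncard - 1 :=
      Set.ncard_diff_singleton_of_mem hu
    have h0 : 0 < F.ncard := (Set.ncard_pos (Set.toFinite F)).mpr ⟨u, hu⟩
    have hle : sInf B ≤ (F \ {u}).ncard := Nat.sInf_le ⟨F \ {u}, hcut, rfl⟩
    omega
  have hcomp : ∀ a : Fin n → ZMod 4, a ∉ F → tw a ∉ F := by
    intro a ha hmem
    have := hclosed _ hmem
    rw [tw_tw] at this
    exact ha this
  have h2i : IsRestrictedCut (BH n) (2 * i) F := by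
    refine ⟨hF.1, fun v => ?_⟩
    have hlow := hF.2 v
    have heven : Even (((BH n).induce Fᶜ).neighborSet v).ncard := by
      have hfin : (((BH n).induce Fᶜ).neighborSet v).Finite := Set.toFinite _
      rw [Set.ncard_eq_toFinset_card _ hfin]
      refine even_card_invol (fun a => (⟨tw a.1, (Set.mem_compl_iff F (tw a.1)).mpr (hcomp a.1 ((Set.mem_compl_iff F a.1).mp a.2))⟩ : ↥(Fᶜ : Set (Fin n → ZMod 4))))
        hfin.toFinset ?_ ?_ ?_
      · intro a ha
        rw [Set.Finite.mem_toFinset, SimpleGraph.mem_neighborSet, SimpleGraph.comap_adj] at ha ⊢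
        simp only [Function.Embedding.coe_subtype] at ha ⊢
        exact adj_tw' ha
      · intro a _
        exact Subtype.ext (tw_tw a.1)
      · intro a _ hEq
        exact tw_ne a.1 (Subtype.mk_eq_mk.mp hEq)
    obtain ⟨c, hc⟩ := heven
    omega
  exact le_trans (Nat.sInf_le ⟨F, h2i, rfl⟩) (le_of_eq hcard)
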